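/- arXiv:2205.09459 — 4 statements merged into one kernel-verified Lean document; each statement's English description precedes it below -/
import Mathlib

section
/- Fix n ∈ ℕ⁺ and δ̃ ∈ (0, 2^{−n}). Suppose φ₀ : ℝ → ℝ satisfies φ₀(y) = z for every z ∈ {0,1} and y ∈ [z, z + 1 − δ̃]. Let x ∈ ⋃_{ℓ=0}^{2ⁿ−1} [ℓ, ℓ + 1 − 2ⁿδ̃] and write ⌊x⌋ = Σ_{i=0}^{n−1} z_i 2^i with z_i ∈ {0,1}. Then for each j ∈ {0,1,…,n−1}, φ₀((x − Σ_{i=j+1}^{n−1} z_i 2^i)/2^j) = z_j. -/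
theorem bit_extraction_base (n : ℕ) (hn : 0 < n) (δ : ℝ) (hδ0 : 0 < δ)
    (hδ : δ < 1 / 2 ^ n)
    (φ₀ : ℝ → ℝ)
    (hφ₀ : ∀ z : ℕ, z ≤ 1 → ∀ y ∈ Set.Icc (z : ℝ) ((z : ℝ) + 1 - δ), φ₀ y = z)
    (x : ℝ) (hx : ∃ ℓ : ℕ, ℓ < 2 ^ n ∧ x ∈ Set.Icc (ℓ : ℝ) ((ℓ : ℝ) + 1 - 2 ^ n * δ))
    (z : ℕ → ℕ) (hz : ∀ i, z i ≤ 1)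
    (hfloor : ⌊x⌋ = ∑ i ∈ Finset.range n, (z i : ℤ) * 2 ^ i) :
    ∀ j < n, φ₀ ((x - ∑ i ∈ Finset.Ico (j + 1) n, (z i : ℝ) * 2 ^ i) / 2 ^ j) = z j := by
  obtain ⟨ℓ, hℓ, hx1, hx2⟩ := hx
  have h2δ : (0:ℝ) < 2 ^ n * δ := by positivity
  have hfl : ⌊x⌋ = (ℓ : ℤ) := by
    apply Int.floor_eq_iff.mpr
    constructor
    · exact_mod_cast hx1
    · push_cast; linarith
  intro j hj
  have hj1 : j + 1 ≤ n := hj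
  have hsumsplit :
      (∑ i ∈ Finset.range (j+1), (z i : ℝ) * 2 ^ i)
        + ∑ i ∈ Finset.Ico (j+1) n, (z i : ℝ) * 2 ^ i
        = ∑ i ∈ Finset.range n, (z i : ℝ) * 2 ^ i :=
    Finset.sum_range_add_sum_Ico _ hj1
  have hℓeq : (ℓ:ℝ) = ∑ i ∈ Finset.range n, (z i : ℝ) * 2 ^ i := by
    have := hfloor
    rw [hfl] at this
    exact_mod_cast this
  set S : ℝ := ∑ i ∈ Finset.range j, (z i : ℝ) * 2 ^ i with hS
  set T : ℝ := ∑ i ∈ Finset.Ico (j+1) n, (z i : ℝ) * 2 ^ i with hT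
  have hsplit : (ℓ:ℝ) = S + (z j : ℝ) * 2 ^ j + T := by
    rw [hℓeq, ← hsumsplit, Finset.sum_range_succ]
  have hS0 : 0 ≤ S := by positivity
  have hS1 : S ≤ 2 ^ j - 1 := by
    have h1 : S ≤ ∑ i ∈ Finset.range j, (2:ℝ) ^ i := by
      apply Finset.sum_le_sum
      intro i _
      have : (z i : ℝ) ≤ 1 := by exact_mod_cast hz i
      nlinarith [pow_pos (by norm_num : (0:ℝ) < 2) i]
    have h2 : ∑ i ∈ Finset.range j, (2:ℝ) ^ i = 2 ^ j - 1 := by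
      rw [geom_sum_eq (by norm_num)]; ring
    linarith
  have hjn : (2:ℝ) ^ j * δ ≤ 2 ^ n * δ := by
    have : (2:ℝ) ^ j ≤ 2 ^ n := pow_le_pow_right₀ (by norm_num) (le_of_lt hj)
    nlinarith
  have h2j : (0:ℝ) < 2 ^ j := by positivity
  have hy : (x - T) / 2 ^ j = (z j : ℝ) + (x - ℓ + S) / 2 ^ j := by
    field_simp
    rw [hsplit]; ring
  rw [hy]
  apply hφ₀ (z j) (hz j)
  constructor
  · have : 0 ≤ (x - ℓ + S) / 2 ^ j := by
      apply div_nonneg _ (le_of_lt h2j)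
      linarith
    linarith
  · have hnum : x - ℓ + S ≤ 2 ^ j * (1 - δ) := by nlinarith
    have : (x - ℓ + S) / 2 ^ j ≤ 1 - δ := by
      rw [div_le_iff₀ h2j]; linarith [hnum]
    linarith
end

section
/- Fix m, n ∈ ℕ⁺ and δ ∈ (0, m^{−n}). Suppose g : ℝ → ℝ satisfies g(y) = ⌊y⌋ for every y ∈ ⋃_{ℓ=0}^{m−1} [ℓ, ℓ + 1 − δ]. Let x ∈ ⋃_{ℓ=0}^{mⁿ−1} [ℓ, ℓ + 1 − mⁿδ] and write ⌊x⌋ = Σ_{i=0}^{n−1} z_i m^i with z_i ∈ {0,1,…,m−1}. Then for each j ∈ {0,1,…,n−1}, g((x − Σ_{i=j+1}^{n−1} z_i m^i)/m^j) = z_j. -/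
theorem bit_extraction_induction (m n : ℕ) (hm : 0 < m) (hn : 0 < n)
    (δ : ℝ) (hδ0 : 0 < δ) (hδ : δ < 1 / (m : ℝ) ^ n)
    (g : ℝ → ℝ)
    (hg : ∀ ℓ : ℕ, ℓ < m → ∀ y ∈ Set.Icc (ℓ : ℝ) ((ℓ : ℝ) + 1 - δ), g y = ⌊y⌋)
    (x : ℝ)
    (hx : ∃ ℓ : ℕ, ℓ < m ^ n ∧ x ∈ Set.Icc (ℓ : ℝ) ((ℓ : ℝ) + 1 - (m : ℝ) ^ n * δ))
    (z : ℕ → ℕ) (hz : ∀ i, z i < m)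
    (hfloor : ⌊x⌋ = ∑ i ∈ Finset.range n, (z i : ℤ) * (m : ℤ) ^ i) :
    ∀ j < n, g ((x - ∑ i ∈ Finset.Ico (j + 1) n, (z i : ℝ) * (m : ℝ) ^ i) / (m : ℝ) ^ j)
      = z j := by
  obtain ⟨ℓ, hℓ, hx1, hx2⟩ := hx
  intro j hj
  have hm1 : (1:ℝ) ≤ (m:ℝ) := by exact_mod_cast hm
  have hpj : (0:ℝ) < (m:ℝ)^j := by positivity
  have hpn : (0:ℝ) < (m:ℝ)^n := by positivity
  have hδ1 : (m:ℝ)^n * δ < 1 := by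
    rw [lt_div_iff₀ hpn] at hδ; linarith
  -- floor of x is ℓ
  have hfl : ⌊x⌋ = (ℓ:ℤ) := by
    rw [Int.floor_eq_iff]
    constructor
    · exact_mod_cast hx1
    · push_cast
      nlinarith [mul_pos hpn hδ0]
  have hxval : x = (∑ i ∈ Finset.range n, (z i : ℝ) * (m : ℝ) ^ i) + (x - ⌊x⌋) := by
    have : ((⌊x⌋ : ℤ) : ℝ) = ∑ i ∈ Finset.range n, (z i : ℝ) * (m : ℝ) ^ i := by
      rw [hfloor]; push_cast; ring
    linarith [this]
  set f := x - (⌊x⌋ : ℝ) with hf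
  have hf0 : 0 ≤ f := by
    have := Int.floor_le x; linarith
  have hf1 : f ≤ 1 - (m:ℝ)^n * δ := by
    rw [hf, hfl]; push_cast; linarith
  -- split sum
  have hsplit : ∑ i ∈ Finset.range n, (z i : ℝ) * (m : ℝ) ^ i
      = (∑ i ∈ Finset.range j, (z i : ℝ) * (m : ℝ) ^ i) + (z j : ℝ) * (m:ℝ)^j
        + ∑ i ∈ Finset.Ico (j + 1) n, (z i : ℝ) * (m : ℝ) ^ i := by
    rw [Finset.range_eq_Ico, ← Finset.sum_Ico_consecutive _ (Nat.zero_le (j+1)) hj,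
      ← Finset.range_eq_Ico, Finset.sum_range_succ]
  set A := ∑ i ∈ Finset.range j, (z i : ℝ) * (m : ℝ) ^ i with hA
  have hA0 : 0 ≤ A := Finset.sum_nonneg fun i _ => by positivity
  have hAle : A ≤ (m:ℝ)^j - 1 := by
    calc A ≤ ∑ i ∈ Finset.range j, ((m:ℝ) - 1) * (m:ℝ)^i := by
            apply Finset.sum_le_sum
            intro i _
            apply mul_le_mul_of_nonneg_right _ (by positivity)
            have := hz i
            have : (z i : ℝ) + 1 ≤ (m:ℝ) := by exact_mod_cast Nat.succ_le_of_lt this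
            linarith
      _ = (m:ℝ)^j - 1 := by
            rw [← Finset.mul_sum, mul_comm, geom_sum_mul]
  -- the argument
  have harg : (x - ∑ i ∈ Finset.Ico (j + 1) n, (z i : ℝ) * (m : ℝ) ^ i) / (m : ℝ) ^ j
      = (z j : ℝ) + (A + f) / (m:ℝ)^j := by
    field_simp
    nlinarith [hxval, hsplit]
  set y := (x - ∑ i ∈ Finset.Ico (j + 1) n, (z i : ℝ) * (m : ℝ) ^ i) / (m : ℝ) ^ j
  have hpow_le : (m:ℝ)^j ≤ (m:ℝ)^n := pow_le_pow_right₀ hm1 (le_of_lt hj)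
  have hub : (A + f) / (m:ℝ)^j ≤ 1 - δ := by
    rw [div_le_iff₀ hpj]
    nlinarith [mul_le_mul_of_nonneg_right hpow_le (le_of_lt hδ0)]
  have hlb : 0 ≤ (A + f) / (m:ℝ)^j := by positivity
  have hy1 : (z j : ℝ) ≤ y := by rw [harg]; linarith
  have hy2 : y ≤ (z j : ℝ) + 1 - δ := by rw [harg]; linarith
  have hgy := hg (z j) (hz j) y ⟨hy1, hy2⟩
  rw [hgy]
  have : ⌊y⌋ = (z j : ℤ) := by
    rw [Int.floor_eq_iff]
    constructor
    · exact_mod_cast hy1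
    · push_cast; linarith
  rw [this]; push_cast; ring
end

section
/- For every x ∈ ⋃_{ℓ=0}^{mⁿ−1} [ℓ, ℓ + 1 − mⁿδ] with 0 < mⁿδ < 1, writing ⌊x⌋ = Σ_{i=0}^{n−1} z_i m^i with digits z_i ∈ {0,…,m−1}, one has for each j ∈ {0,…,n−1} the containment (x − Σ_{i=j+1}^{n−1} z_i m^i)/m^j ∈ [z_j, z_j + 1 − δ]. -/
theorem digit_quotient_mem_Icc (m n : ℕ) (hm : 0 < m) (hn : 0 < n)
    (δ : ℝ) (hδ0 : 0 < δ) (hδ : (m : ℝ) ^ n * δ < 1)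
    (x : ℝ)
    (hx : ∃ ℓ : ℕ, ℓ < m ^ n ∧ x ∈ Set.Icc (ℓ : ℝ) ((ℓ : ℝ) + 1 - (m : ℝ) ^ n * δ))
    (z : ℕ → ℕ) (hz : ∀ i, z i < m)
    (hfloor : ⌊x⌋ = ∑ i ∈ Finset.range n, (z i : ℤ) * (m : ℤ) ^ i) :
    ∀ j < n,
      (x - ∑ i ∈ Finset.Ico (j + 1) n, (z i : ℝ) * (m : ℝ) ^ i) / (m : ℝ) ^ j
        ∈ Set.Icc ((z j : ℝ)) ((z j : ℝ) + 1 - δ) := by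
  obtain ⟨ℓ, hℓ, hx1, hx2⟩ := hx
  have hm1 : (1:ℝ) ≤ m := by exact_mod_cast hm
  have hpos : (0:ℝ) < (m:ℝ)^n * δ := by positivity
  have hfl : ⌊x⌋ = (ℓ : ℤ) := by
    rw [Int.floor_eq_iff]
    constructor
    · exact_mod_cast hx1
    · push_cast; linarith
  have hsum : (ℓ : ℝ) = ∑ i ∈ Finset.range n, (z i : ℝ) * (m : ℝ) ^ i := by
    have h := hfl ▸ hfloor
    exact_mod_cast h
  intro j hj
  have hmj : (0:ℝ) < (m:ℝ)^j := by positivity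
  have hsplit : ∑ i ∈ Finset.range (j+1), (z i : ℝ) * (m:ℝ)^i
      + ∑ i ∈ Finset.Ico (j+1) n, (z i : ℝ) * (m:ℝ)^i
      = ∑ i ∈ Finset.range n, (z i : ℝ) * (m:ℝ)^i :=
    Finset.sum_range_add_sum_Ico _ hj
  have hsucc : ∑ i ∈ Finset.range (j+1), (z i : ℝ) * (m:ℝ)^i
      = ∑ i ∈ Finset.range j, (z i : ℝ) * (m:ℝ)^i + (z j : ℝ) * (m:ℝ)^j :=
    Finset.sum_range_succ _ _
  have hbound : ∑ i ∈ Finset.range j, (z i : ℝ) * (m:ℝ)^i ≤ (m:ℝ)^j - 1 := by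
    calc ∑ i ∈ Finset.range j, (z i : ℝ) * (m:ℝ)^i
        ≤ ∑ i ∈ Finset.range j, ((m:ℝ) - 1) * (m:ℝ)^i := by
          apply Finset.sum_le_sum
          intro i _
          have h1 : (z i : ℝ) + 1 ≤ m := by exact_mod_cast hz i
          have h2 : (z i : ℝ) ≤ (m:ℝ) - 1 := by linarith
          exact mul_le_mul_of_nonneg_right h2 (by positivity)
      _ = (m:ℝ)^j - 1 := by
          rw [← Finset.mul_sum, mul_comm, geom_sum_mul]
  have hnonneg : 0 ≤ ∑ i ∈ Finset.range j, (z i : ℝ) * (m:ℝ)^i :=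
    Finset.sum_nonneg fun i _ => by positivity
  have hF0 : 0 ≤ x - ℓ := by linarith
  have hF1 : x - ℓ ≤ 1 - (m:ℝ)^n * δ := by linarith
  have hjn : (m:ℝ)^j ≤ (m:ℝ)^n := pow_le_pow_right₀ hm1 hj.le
  have hδj : (m:ℝ)^j * δ ≤ (m:ℝ)^n * δ :=
    mul_le_mul_of_nonneg_right hjn hδ0.le
  have key : x - ∑ i ∈ Finset.Ico (j+1) n, (z i : ℝ) * (m:ℝ)^i
      = (x - ℓ) + ∑ i ∈ Finset.range j, (z i : ℝ) * (m:ℝ)^i + (z j : ℝ) * (m:ℝ)^j := by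
    rw [hsum, ← hsplit, hsucc]; ring
  constructor
  · rw [le_div_iff₀ hmj, key]; nlinarith
  · rw [div_le_iff₀ hmj, key]; nlinarith
end

section
/- Let K ∈ ℕ⁺, δ ∈ (0, 1/(3K)], f ∈ C([0,1]^d), and g : ℝ^d → ℝ satisfy |g(x) − f(x)| ≤ ε for all x ∈ [0,1]^d \ Ω([0,1]^d, K, δ). Define φ₀ = g and, for i = 0,…,d−1, φ_{i+1}(x) = mid(φ_i(x − δe_{i+1}), φ_i(x), φ_i(x + δe_{i+1})), where mid returns the middle value of its three arguments and e_j is the j-th standard basis vector. Then φ := φ_d satisfies |φ(x) − f(x)| ≤ ε + d·ω_f(δ) for all x ∈ [0,1]^d. -/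
/-- The middle value (median) of three reals, expressed via max/min. -/
noncomputable def mid (a b c : ℝ) : ℝ := max (min a b) (min (max a b) c)

/-- The unit cube `[0,1]^d`. -/
def unitCube (d : ℕ) : Set (EuclideanSpace ℝ (Fin d)) :=
  {x | ∀ i, x i ∈ Set.Icc (0:ℝ) 1}

/-- The trifling region `Ω([0,1]^d, K, δ)`. -/
def trifling (d K : ℕ) (δ : ℝ) : Set (EuclideanSpace ℝ (Fin d)) :=
  {x | (∀ i, x i ∈ Set.Icc (0:ℝ) 1) ∧
    ∃ j : Fin d, ∃ k : ℕ, 1 ≤ k ∧ k ≤ K - 1 ∧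
      x j ∈ Set.Ioo ((k : ℝ) / K - δ) ((k : ℝ) / K)}

/-- The modulus of continuity of `f` on `[0,1]^d` w.r.t. the Euclidean norm. -/
noncomputable def modCont (d : ℕ) (f : EuclideanSpace ℝ (Fin d) → ℝ) (r : ℝ) : ℝ :=
  sSup {t : ℝ | ∃ x y : EuclideanSpace ℝ (Fin d),
    (∀ i, x i ∈ Set.Icc (0:ℝ) 1) ∧ (∀ i, y i ∈ Set.Icc (0:ℝ) 1) ∧
    dist x y ≤ r ∧ t = |f x - f y|}

lemma mid_abs {a b c m r : ℝ}
    (h : (|a-m| ≤ r ∧ |b-m| ≤ r) ∨ (|a-m| ≤ r ∧ |c-m| ≤ r) ∨ (|b-m| ≤ r ∧ |c-m| ≤ r)) :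
    |mid a b c - m| ≤ r := by
  simp only [abs_le] at *
  unfold mid
  rcases h with ⟨ha,hb⟩|⟨ha,hc⟩|⟨hb,hc⟩ <;>
  constructor <;>
  simp only [min_def, max_def] <;> split_ifs <;> linarith

/-- Points that are "good" in one coordinate: inside `[0,1]` and outside all strips. -/
def OKpt (K : ℕ) (δ s : ℝ) : Prop :=
  0 ≤ s ∧ s ≤ 1 ∧ ∀ k : ℕ, 1 ≤ k → k ≤ K - 1 → ¬((k:ℝ)/K - δ < s ∧ s < (k:ℝ)/K)

lemma strip_gap {K k k' : ℕ} {δ s s' : ℝ} (hK : (0:ℝ) < K)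
    (h3 : 3*δ*(K:ℝ) ≤ 1)
    (hs : (k:ℝ)/K - δ < s ∧ s < (k:ℝ)/K) (hs' : (k':ℝ)/K - δ < s' ∧ s' < (k':ℝ)/K)
    (hd1 : s + δ ≤ s') (hd2 : s' ≤ s + 2*δ) : False := by
  have hKinv : 3*δ ≤ 1/(K:ℝ) := by rw [le_div_iff₀ hK]; linarith
  have h1 : (k:ℝ)/K < (k':ℝ)/K := by linarith [hs.1, hs'.2]
  have h2 : (k':ℝ)/K < ((k:ℝ)+1)/K := by
    have he : ((k:ℝ)+1)/K = (k:ℝ)/K + 1/K := by ring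
    rw [he]; linarith [hs'.1, hs.2]
  have h1' : k < k' := by
    rw [div_lt_div_iff_of_pos_right hK] at h1; exact_mod_cast h1
  have h2' : k' < k + 1 := by
    rw [div_lt_div_iff_of_pos_right hK] at h2; exact_mod_cast h2
  omega

lemma badCases {K : ℕ} {δ s : ℝ} (h : ¬ OKpt K δ s) :
    s < 0 ∨ 1 < s ∨ ∃ k : ℕ, 1 ≤ k ∧ k ≤ K - 1 ∧ (k:ℝ)/K - δ < s ∧ s < (k:ℝ)/K := by
  by_contra h'
  push_neg at h'
  exact h ⟨by linarith [h'.1], by linarith [h'.2.1],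
    fun k hk1 hk2 hs => by linarith [h'.2.2 k hk1 hk2 hs.1, hs.2]⟩

lemma strip_bounds {K k : ℕ} (hK : 0 < K) (hk1 : 1 ≤ k) (hk2 : k ≤ K - 1) :
    1/(K:ℝ) ≤ (k:ℝ)/K ∧ (k:ℝ)/K ≤ 1 - 1/K := by
  have hKR : (0:ℝ) < K := by exact_mod_cast hK
  constructor
  · gcongr; exact_mod_cast hk1
  · have hkK : (k:ℝ) ≤ (K:ℝ) - 1 := by
      have h : k + 1 ≤ K := by omega
      have h' := (Nat.cast_le (α := ℝ)).mpr h
      push_cast at h'; linarith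
    have he : ((K:ℝ)-1)/K = 1 - 1/K := by field_simp
    calc (k:ℝ)/K ≤ ((K:ℝ)-1)/K := by gcongr
    _ = 1 - 1/K := he

lemma twoOfThree {K : ℕ} {δ t : ℝ} (hK : 0 < K) (hδ0 : 0 < δ) (h3 : 3*δ*(K:ℝ) ≤ 1)
    (ht0 : 0 ≤ t) (ht1 : t ≤ 1) :
    (OKpt K δ (t-δ) ∧ OKpt K δ t) ∨ (OKpt K δ (t-δ) ∧ OKpt K δ (t+δ)) ∨
    (OKpt K δ t ∧ OKpt K δ (t+δ)) := by
  have hKR : (0:ℝ) < K := by exact_mod_cast hK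
  have hKinv : 3*δ ≤ 1/(K:ℝ) := by rw [le_div_iff₀ hKR]; linarith
  have hK1 : 1/(K:ℝ) ≤ 1 := by
    rw [div_le_one hKR]; exact_mod_cast hK
  have pair12 : ¬ OKpt K δ (t-δ) → ¬ OKpt K δ t → False := by
    intro hb1 hb2
    rcases badCases hb2 with h|h|⟨k',hk1',hk2',hks'⟩
    · linarith
    · linarith
    obtain ⟨hlo', _⟩ := strip_bounds hK hk1' hk2'
    rcases badCases hb1 with h|h|⟨k,hk1,hk2,hks⟩
    · linarith [hks'.1]
    · linarith
    · exact strip_gap hKR h3 hks hks' (by linarith) (by linarith)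
  have pair13 : ¬ OKpt K δ (t-δ) → ¬ OKpt K δ (t+δ) → False := by
    intro hb1 hb3
    rcases badCases hb1 with h|h|⟨k,hk1,hk2,hks⟩ <;>
      rcases badCases hb3 with h'|h'|⟨k',hk1',hk2',hks'⟩
    · linarith
    · linarith
    · obtain ⟨hlo', _⟩ := strip_bounds hK hk1' hk2'
      linarith [hks'.1]
    · linarith
    · linarith
    · linarith
    · linarith
    · obtain ⟨_, hhi⟩ := strip_bounds hK hk1 hk2
      linarith [hks.2]
    · exact strip_gap hKR h3 hks hks' (by linarith) (by linarith)
  have pair23 : ¬ OKpt K δ t → ¬ OKpt K δ (t+δ) → False := by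
    intro hb2 hb3
    rcases badCases hb2 with h|h|⟨k,hk1,hk2,hks⟩
    · linarith
    · linarith
    obtain ⟨_, hhi⟩ := strip_bounds hK hk1 hk2
    rcases badCases hb3 with h'|h'|⟨k',hk1',hk2',hks'⟩
    · linarith
    · linarith [hks.2]
    · exact strip_gap hKR h3 hks hks' (by linarith) (by linarith)
  by_cases h1 : OKpt K δ (t-δ) <;> by_cases h2 : OKpt K δ t <;>
    by_cases h3' : OKpt K δ (t+δ)
  · exact Or.inl ⟨h1, h2⟩
  · exact Or.inl ⟨h1, h2⟩
  · exact Or.inr (Or.inl ⟨h1, h3'⟩)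
  · exact absurd (pair23 h2 h3') id
  · exact Or.inr (Or.inr ⟨h2, h3'⟩)
  · exact absurd (pair13 h1 h3') id
  · exact absurd (pair12 h1 h2) id
  · exact absurd (pair12 h1 h2) id

theorem mid_construction_approx (d K : ℕ) (hd : 0 < d) (hK : 0 < K)
    (δ : ℝ) (hδ0 : 0 < δ) (hδK : δ ≤ 1 / (3 * K))
    (f : EuclideanSpace ℝ (Fin d) → ℝ) (hf : ContinuousOn f (unitCube d))
    (ε : ℝ) (g : EuclideanSpace ℝ (Fin d) → ℝ)
    (hg : ∀ x ∈ unitCube d \ trifling d K δ, |g x - f x| ≤ ε)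
    (φ : ℕ → EuclideanSpace ℝ (Fin d) → ℝ) (hφ0 : φ 0 = g)
    (hφ : ∀ i : Fin d, ∀ x,
      φ (i.1 + 1) x =
        mid (φ i.1 (x - δ • EuclideanSpace.single i (1:ℝ))) (φ i.1 x)
          (φ i.1 (x + δ • EuclideanSpace.single i (1:ℝ)))) :
    ∀ x ∈ unitCube d, |φ d x - f x| ≤ ε + d * modCont d f δ := by
  have hKR : (0:ℝ) < K := by exact_mod_cast hK
  have h3 : 3*δ*(K:ℝ) ≤ 1 := by
    rw [le_div_iff₀ (by positivity : (0:ℝ) < 3*K)] at hδK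
    linarith
  -- compactness and boundedness
  have hcompact : IsCompact (unitCube d) := by
    have heq : unitCube d =
        (EuclideanSpace.equiv (Fin d) ℝ) ⁻¹' (Set.univ.pi fun _ => Set.Icc (0:ℝ) 1) := by
      ext x
      simp only [unitCube, Set.mem_preimage, Set.mem_pi, Set.mem_univ, Set.mem_setOf_eq,
        true_implies]
      rfl
    rw [heq]
    exact ((EuclideanSpace.equiv (Fin d) ℝ).toHomeomorph.isCompact_preimage).mpr
      (isCompact_univ_pi fun _ => isCompact_Icc)
  obtain ⟨M, hM⟩ := hcompact.exists_bound_of_continuousOn hf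
  set ω := modCont d f δ with hω
  have hbdd : BddAbove {t : ℝ | ∃ x y : EuclideanSpace ℝ (Fin d),
      (∀ i, x i ∈ Set.Icc (0:ℝ) 1) ∧ (∀ i, y i ∈ Set.Icc (0:ℝ) 1) ∧
      dist x y ≤ δ ∧ t = |f x - f y|} := by
    refine ⟨M + M, ?_⟩
    rintro t ⟨x, y, hx, hy, -, rfl⟩
    have h1 : |f x| ≤ M := by
      have := hM x hx; rwa [Real.norm_eq_abs] at this
    have h2 : |f y| ≤ M := by
      have := hM y hy; rwa [Real.norm_eq_abs] at this
    calc |f x - f y| ≤ |f x| + |f y| := abs_sub _ _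
    _ ≤ M + M := by linarith
  have hωle : ∀ x y : EuclideanSpace ℝ (Fin d),
      (∀ i, x i ∈ Set.Icc (0:ℝ) 1) → (∀ i, y i ∈ Set.Icc (0:ℝ) 1) →
      dist x y ≤ δ → |f x - f y| ≤ ω :=
    fun x y hx hy hdi => le_csSup hbdd ⟨x, y, hx, hy, hdi, rfl⟩
  -- main induction
  have main : ∀ i : ℕ, i ≤ d → ∀ x : EuclideanSpace ℝ (Fin d),
      (∀ m : Fin d, x m ∈ Set.Icc (0:ℝ) 1) →
      (∀ m : Fin d, i ≤ m.1 → ∀ k : ℕ, 1 ≤ k → k ≤ K - 1 →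
        ¬((k:ℝ)/K - δ < x m ∧ x m < (k:ℝ)/K)) →
      |φ i x - f x| ≤ ε + i * ω := by
    intro i
    induction i with
    | zero =>
      intro _ x hx hgood
      rw [hφ0]
      simp only [Nat.cast_zero, zero_mul, add_zero]
      apply hg
      refine ⟨hx, ?_⟩
      rintro ⟨-, j, k, hk1, hk2, hIoo⟩
      exact hgood j (Nat.zero_le _) k hk1 hk2 ⟨hIoo.1, hIoo.2⟩
    | succ i ih =>
      intro hd1 x hx hgood
      have hilt : i < d := lt_of_lt_of_le (Nat.lt_succ_self i) hd1
      let j : Fin d := ⟨i, hilt⟩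
      have hshift : ∀ c : ℝ, |c| ≤ δ → OKpt K δ (x j + c) →
          |φ i (x + c • EuclideanSpace.single j (1:ℝ)) - f x| ≤ ε + i * ω + ω := by
        intro c hc hOK
        set y := x + c • EuclideanSpace.single j (1:ℝ) with hy
        have hym : ∀ m : Fin d, y m = if m = j then x j + c else x m := by
          intro m
          simp only [hy, PiLp.add_apply, PiLp.smul_apply, EuclideanSpace.single_apply,
            smul_eq_mul]
          split_ifs with h
          · rw [h]; ring
          · ring
        have hycube : ∀ m, y m ∈ Set.Icc (0:ℝ) 1 := by
          intro m; rw [hym m]; split_ifs with h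
          · exact ⟨hOK.1, hOK.2.1⟩
          · exact hx m
        have hygood : ∀ m : Fin d, i ≤ m.1 → ∀ k : ℕ, 1 ≤ k → k ≤ K - 1 →
            ¬((k:ℝ)/K - δ < y m ∧ y m < (k:ℝ)/K) := by
          intro m hm
          rw [hym m]; split_ifs with h
          · exact hOK.2.2
          · apply hgood m
            have hne : m.1 ≠ i := fun he => h (Fin.ext he)
            omega
        have hdist : dist x y = |c| := by
          rw [hy, dist_self_add_right, norm_smul, EuclideanSpace.norm_single]
          simp [Real.norm_eq_abs]
        have h1 := ih (le_of_lt hilt) y hycube hygood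
        have h2 : |f y - f x| ≤ ω := hωle y x hycube hx (by rw [dist_comm, hdist]; exact hc)
        calc |φ i y - f x| ≤ |φ i y - f y| + |f y - f x| := abs_sub_le _ _ _
        _ ≤ ε + i * ω + ω := by linarith
      have hstep : φ (i+1) x =
          mid (φ i (x - δ • EuclideanSpace.single j (1:ℝ))) (φ i x)
            (φ i (x + δ • EuclideanSpace.single j (1:ℝ))) := hφ j x
      have hr : ε + ((i:ℝ)+1) * ω = ε + i * ω + ω := by ring
      rw [hstep]
      push_cast
      rw [hr]
      have hA : OKpt K δ (x j - δ) →
          |φ i (x - δ • EuclideanSpace.single j (1:ℝ)) - f x| ≤ ε + i * ω + ω := by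
        intro hOK
        have := hshift (-δ) (by rw [abs_neg, abs_of_pos hδ0]) (by
          rw [← sub_eq_add_neg]; exact hOK)
        rwa [neg_smul, ← sub_eq_add_neg] at this
      have hB : OKpt K δ (x j) → |φ i x - f x| ≤ ε + i * ω + ω := by
        intro hOK
        have := hshift 0 (by simp [le_of_lt hδ0]) (by simpa using hOK)
        rwa [zero_smul, add_zero] at this
      have hC : OKpt K δ (x j + δ) →
          |φ i (x + δ • EuclideanSpace.single j (1:ℝ)) - f x| ≤ ε + i * ω + ω := by
        intro hOK
        exact hshift δ (le_of_eq (abs_of_pos hδ0)) hOK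
      apply mid_abs
      rcases twoOfThree hK hδ0 h3 (hx j).1 (hx j).2 with ⟨h1, h2⟩|⟨h1, h2⟩|⟨h1, h2⟩
      · exact Or.inl ⟨hA h1, hB h2⟩
      · exact Or.inr (Or.inl ⟨hA h1, hC h2⟩)
      · exact Or.inr (Or.inr ⟨hB h1, hC h2⟩)
  intro x hx
  exact main d le_rfl x hx (fun m hm => absurd hm (not_le.mpr m.2))
end
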